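/- For real constants α, β with α ≠ 0, σ > 0 and μ real, the integral ∫_{-∞}^{∞} erf(αν + β) · (1/√(2πσ²)) exp(−(ν−μ)²/(2σ²)) dν equals erf((αμ + β)/√(1 + 2α²σ²)). -/

import Mathlib

open Real MeasureTheory

noncomputable def erf (z : ℝ) : ℝ :=
  (2 / Real.sqrt Real.pi) * ∫ t in (0:ℝ)..z, Real.exp (-t^2)

lemma cont_gauss : Continuous fun t : ℝ => Real.exp (-t^2) :=
  Real.continuous_exp.comp (continuous_pow 2).neg

lemma erf_hasDerivAt (z : ℝ) :
    HasDerivAt erf (2 / Real.sqrt Real.pi * Real.exp (-z^2)) z := by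
  have h : HasDerivAt (fun z => ∫ t in (0:ℝ)..z, Real.exp (-t^2)) (Real.exp (-z^2)) z :=
    intervalIntegral.integral_hasDerivAt_right (cont_gauss.intervalIntegrable _ _)
      (cont_gauss.stronglyMeasurable.stronglyMeasurableAtFilter) cont_gauss.continuousAt
  exact h.const_mul _

lemma erf_continuous : Continuous erf :=
  (Differentiable.continuous fun z => (erf_hasDerivAt z).differentiableAt)

lemma erf_neg (z : ℝ) : erf (-z) = - erf z := by
  unfold erf
  have h : (∫ t in (0:ℝ)..(-z), Real.exp (-t^2)) = - ∫ t in (0:ℝ)..z, Real.exp (-t^2) := by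
    rw [intervalIntegral.integral_symm]
    have := intervalIntegral.integral_comp_neg (a := (0:ℝ)) (b := z) fun t => Real.exp (-t^2)
    simp only [neg_sq, neg_zero] at this
    rw [← this]
  rw [h]; ring

lemma erf_zero : erf 0 = 0 := by simp [erf]

lemma erf_abs_le_one (z : ℝ) : |erf z| ≤ 1 := by
  have key : ∀ z : ℝ, 0 ≤ z → 0 ≤ erf z ∧ erf z ≤ 1 := by
    intro z hz
    have hint : (∫ t in (0:ℝ)..z, Real.exp (-t^2)) = ∫ t in Set.Ioc 0 z, Real.exp (-t^2) :=
      intervalIntegral.integral_of_le hz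
    have hIoi : (∫ t in Set.Ioi (0:ℝ), Real.exp (-t^2)) = Real.sqrt Real.pi / 2 := by
      have := integral_gaussian_Ioi (1:ℝ)
      simp only [one_mul, neg_mul, div_one] at this
      exact this
    have hIntOn : IntegrableOn (fun t : ℝ => Real.exp (-t^2)) (Set.Ioi 0) := by
      have := (integrable_exp_neg_mul_sq (b := (1:ℝ)) one_pos).integrableOn (s := Set.Ioi 0)
      simpa using this
    have h1 : (∫ t in Set.Ioc 0 z, Real.exp (-t^2)) ≤ ∫ t in Set.Ioi (0:ℝ), Real.exp (-t^2) := by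
      apply setIntegral_mono_set hIntOn
      · filter_upwards with t using (Real.exp_pos _).le
      · filter_upwards with t ht using Set.Ioc_subset_Ioi_self ht
    have h0 : 0 ≤ ∫ t in Set.Ioc 0 z, Real.exp (-t^2) :=
      setIntegral_nonneg measurableSet_Ioc fun t _ => (Real.exp_pos _).le
    have hπ : 0 < Real.sqrt Real.pi := Real.sqrt_pos.mpr Real.pi_pos
    constructor
    · unfold erf; rw [hint]; positivity
    · unfold erf
      rw [hint]
      rw [div_mul_eq_mul_div, div_le_one hπ]
      calc 2 * ∫ t in Set.Ioc 0 z, Real.exp (-t^2) ≤ 2 * (Real.sqrt Real.pi / 2) := by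
            linarith [h1.trans_eq hIoi]
        _ = Real.sqrt Real.pi := by ring
  rcases le_or_gt 0 z with hz | hz
  · have := key z hz
    rw [abs_le]; constructor <;> linarith [this.1, this.2]
  · have := key (-z) (by linarith)
    rw [erf_neg] at this
    rw [abs_le]; constructor <;> linarith [this.1, this.2]

lemma k_integrable {σ : ℝ} (hσ : 0 < σ) :
    Integrable (fun u : ℝ => (Real.sqrt (2*Real.pi*σ^2))⁻¹ * Real.exp (-u^2/(2*σ^2))) := by
  have hb : (0:ℝ) < (2*σ^2)⁻¹ := by positivity
  simp_rw [show ∀ u : ℝ, -u^2/(2*σ^2) = -(2*σ^2)⁻¹*u^2 from fun u => by ring]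
  exact (integrable_exp_neg_mul_sq hb).const_mul _

lemma gauss_conv (α d σ : ℝ) (hσ : 0 < σ) :
    (∫ u : ℝ, Real.exp (-(α*u+d)^2) * ((Real.sqrt (2*Real.pi*σ^2))⁻¹ * Real.exp (-u^2/(2*σ^2))))
    = (Real.sqrt (1+2*α^2*σ^2))⁻¹ * Real.exp (-d^2/(1+2*α^2*σ^2)) := by
  have hσ2 : (0:ℝ) < σ^2 := by positivity
  set b : ℝ := α^2 + 1/(2*σ^2) with hb
  have hbpos : 0 < b := by positivity
  have h2 : 2*σ^2*b = 1+2*α^2*σ^2 := by rw [hb, mul_add, mul_one_div_cancel (by positivity)]; ring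
  have hs : (0:ℝ) < 1+2*α^2*σ^2 := by positivity
  have hc : (0:ℝ) < Real.sqrt (2*Real.pi*σ^2) := Real.sqrt_pos.mpr (by positivity)
  have hpt : ∀ u : ℝ,
      Real.exp (-(α*u+d)^2) * ((Real.sqrt (2*Real.pi*σ^2))⁻¹ * Real.exp (-u^2/(2*σ^2)))
      = ((Real.sqrt (2*Real.pi*σ^2))⁻¹ * Real.exp (-d^2/(1+2*α^2*σ^2)))
        * Real.exp (-b*(u + α*d/b)^2) := by
    intro u
    have hexp : -(α*u+d)^2 + -u^2/(2*σ^2) = -d^2/(1+2*α^2*σ^2) + -b*(u + α*d/b)^2 := by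
      rw [← h2, hb]
      field_simp
      ring
    have h3 := congrArg Real.exp hexp
    rw [Real.exp_add, Real.exp_add] at h3
    calc Real.exp (-(α*u+d)^2) * ((Real.sqrt (2*Real.pi*σ^2))⁻¹ * Real.exp (-u^2/(2*σ^2)))
        = (Real.sqrt (2*Real.pi*σ^2))⁻¹
            * (Real.exp (-(α*u+d)^2) * Real.exp (-u^2/(2*σ^2))) := by ring
      _ = (Real.sqrt (2*Real.pi*σ^2))⁻¹
            * (Real.exp (-d^2/(1+2*α^2*σ^2)) * Real.exp (-b*(u + α*d/b)^2)) := by rw [h3]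
      _ = _ := by ring
  simp_rw [hpt]
  rw [integral_const_mul]
  have htrans : (∫ u : ℝ, Real.exp (-b*(u + α*d/b)^2)) = ∫ u : ℝ, Real.exp (-b*u^2) :=
    integral_add_right_eq_self (fun u : ℝ => Real.exp (-b*u^2)) (α*d/b)
  rw [htrans, integral_gaussian]
  have hsqrt : Real.sqrt (Real.pi / b) = Real.sqrt (2*Real.pi*σ^2) / Real.sqrt (1+2*α^2*σ^2) := by
    rw [← Real.sqrt_div (by positivity)]
    congr 1
    rw [← h2, hb]
    field_simp
  rw [hsqrt]
  field_simp

lemma key (α σ : ℝ) (hσ : 0 < σ) (d : ℝ) :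
    (∫ u : ℝ, erf (α*u + d) * ((Real.sqrt (2*Real.pi*σ^2))⁻¹ * Real.exp (-u^2/(2*σ^2))))
    = erf (d / Real.sqrt (1+2*α^2*σ^2)) := by
  have hs : (0:ℝ) < 1+2*α^2*σ^2 := by positivity
  have hspos : 0 < Real.sqrt (1+2*α^2*σ^2) := Real.sqrt_pos.mpr hs
  have hπ : 0 < Real.sqrt Real.pi := Real.sqrt_pos.mpr Real.pi_pos
  set s : ℝ := Real.sqrt (1+2*α^2*σ^2) with hsdef
  have hs2 : s^2 = 1+2*α^2*σ^2 := Real.sq_sqrt hs.le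
  set k : ℝ → ℝ := fun u => (Real.sqrt (2*Real.pi*σ^2))⁻¹ * Real.exp (-u^2/(2*σ^2)) with hk
  have hkcont : Continuous k := by
    apply Continuous.mul continuous_const
    exact Real.continuous_exp.comp ((continuous_pow 2).neg.div_const _)
  have hknn : ∀ u, 0 ≤ k u := fun u => by
    have h1 : (0:ℝ) ≤ (Real.sqrt (2*Real.pi*σ^2))⁻¹ := by positivity
    exact mul_nonneg h1 (Real.exp_pos _).le
  have hkint : Integrable k := k_integrable hσ
  set G : ℝ → ℝ := fun d => ∫ u : ℝ, erf (α*u + d) * k u with hG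
  set H : ℝ → ℝ := fun d => erf (d / s) with hH
  have hGint : ∀ x : ℝ, Integrable (fun u => erf (α*u + x) * k u) := by
    intro x
    apply hkint.bdd_mul (c := 1)
    · exact (erf_continuous.comp (((continuous_const.mul continuous_id).add
        continuous_const : Continuous fun u : ℝ => α*u + x))).aestronglyMeasurable
    · exact Filter.Eventually.of_forall fun u => by simpa [Real.norm_eq_abs] using erf_abs_le_one (α*u + x)
  have hGderiv : ∀ x : ℝ, HasDerivAt G
      (2 / Real.sqrt Real.pi * (s⁻¹ * Real.exp (-x^2/(1+2*α^2*σ^2)))) x := by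
    intro x
    have hF'cont : ∀ y : ℝ, Continuous (fun u : ℝ =>
        2 / Real.sqrt Real.pi * Real.exp (-(α*u+y)^2) * k u) := by
      intro y
      exact (continuous_const.mul (Real.continuous_exp.comp
        ((((continuous_const.mul continuous_id).add continuous_const :
          Continuous fun u : ℝ => α*u + y).pow 2).neg))).mul hkcont
    have main := hasDerivAt_integral_of_dominated_loc_of_deriv_le (s := Metric.ball x 1) (Metric.ball_mem_nhds x one_pos)
      (F := fun x u => erf (α*u + x) * k u)
      (F' := fun x u => 2 / Real.sqrt Real.pi * Real.exp (-(α*u+x)^2) * k u) (x₀ := x)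
      (bound := fun u => 2 / Real.sqrt Real.pi * k u)
      (Filter.Eventually.of_forall fun y => (hGint y).aestronglyMeasurable)
      (hGint x)
      (hF'cont x).aestronglyMeasurable
      (Filter.Eventually.of_forall fun u y _ => by
        have h1 : Real.exp (-(α*u+y)^2) ≤ 1 := by
          rw [Real.exp_le_one_iff]
          simp [neg_nonpos, sq_nonneg]
        have h2 : 0 < 2 / Real.sqrt Real.pi := by positivity
        have hnn : 0 ≤ 2 / Real.sqrt Real.pi * Real.exp (-(α*u+y)^2) * k u :=
          mul_nonneg (mul_nonneg h2.le (Real.exp_pos _).le) (hknn u)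
        rw [Real.norm_eq_abs, abs_of_nonneg hnn]
        calc 2 / Real.sqrt Real.pi * Real.exp (-(α*u+y)^2) * k u
            ≤ 2 / Real.sqrt Real.pi * 1 * k u := by
              apply mul_le_mul_of_nonneg_right _ (hknn u)
              exact mul_le_mul_of_nonneg_left h1 h2.le
          _ = 2 / Real.sqrt Real.pi * k u := by ring)
      (hkint.const_mul _)
      (Filter.Eventually.of_forall fun u y _ => by
        have h := (erf_hasDerivAt (α*u + y)).comp y ((hasDerivAt_id y).const_add (α*u))
        simp only [mul_one] at h
        exact h.mul_const (k u))
    have hval : (∫ u : ℝ, 2 / Real.sqrt Real.pi * Real.exp (-(α*u+x)^2) * k u)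
        = 2 / Real.sqrt Real.pi * (s⁻¹ * Real.exp (-x^2/(1+2*α^2*σ^2))) := by
      simp_rw [mul_assoc]
      rw [integral_const_mul, gauss_conv α x σ hσ, ← hsdef]
      ring_nf
    rw [← hval]
    exact main.2
  have hHderiv : ∀ x : ℝ, HasDerivAt H
      (2 / Real.sqrt Real.pi * (s⁻¹ * Real.exp (-x^2/(1+2*α^2*σ^2)))) x := by
    intro x
    have h := (erf_hasDerivAt (x / s)).comp x ((hasDerivAt_id x).div_const s)
    have heq : 2 / Real.sqrt Real.pi * Real.exp (-(x/s)^2) * (1 / s)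
        = 2 / Real.sqrt Real.pi * (s⁻¹ * Real.exp (-x^2/(1+2*α^2*σ^2))) := by
      rw [div_pow, hs2, neg_div, one_div]
      ring
    rw [heq] at h
    exact h
  -- G and H agree at 0
  have hG0 : G 0 = 0 := by
    have hodd : ∀ u : ℝ, erf (α*(-u) + 0) * k (-u) = -(erf (α*u + 0) * k u) := by
      intro u
      have h1 : α*(-u) + 0 = -(α*u + 0) := by ring
      have h2 : k (-u) = k u := by simp [hk, neg_sq]
      rw [h1, erf_neg, h2]; ring
    have h := integral_neg_eq_self (fun u : ℝ => erf (α*u + 0) * k u) (volume : Measure ℝ)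
    simp_rw [hodd] at h
    rw [integral_neg] at h
    have : G 0 = - G 0 := by
      simp only [hG]
      exact h.symm
    linarith
  have hH0 : H 0 = 0 := by simp [hH, erf_zero]
  -- equal derivatives, equal at 0
  have hconst : ∀ x : ℝ, G x - H x = G 0 - H 0 := by
    intro x
    apply is_const_of_deriv_eq_zero (f := fun x => G x - H x)
    · exact fun y => ((hGderiv y).sub (hHderiv y)).differentiableAt
    · intro y
      have := ((hGderiv y).sub (hHderiv y))
      rw [sub_self] at this
      exact this.deriv
  have := hconst d
  rw [hG0, hH0] at this
  have hGH : G d = H d := by linarith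
  exact hGH

theorem erf_gaussian_integral (α β μ σ : ℝ) (hα : α ≠ 0) (hσ : 0 < σ) :
    ∫ ν : ℝ, erf (α * ν + β) *
      ((Real.sqrt (2 * Real.pi * σ^2))⁻¹ * Real.exp (-(ν - μ)^2 / (2 * σ^2))) =
    erf ((α * μ + β) / Real.sqrt (1 + 2 * α^2 * σ^2)) := by
  have htrans := integral_add_right_eq_self (μ := (volume : Measure ℝ))
    (fun ν : ℝ => erf (α * ν + β) *
      ((Real.sqrt (2 * Real.pi * σ^2))⁻¹ * Real.exp (-(ν - μ)^2 / (2 * σ^2)))) μ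
  rw [← htrans]
  have heq : ∀ u : ℝ, erf (α * (u + μ) + β) *
      ((Real.sqrt (2 * Real.pi * σ^2))⁻¹ * Real.exp (-(u + μ - μ)^2 / (2 * σ^2)))
      = erf (α * u + (α * μ + β)) *
      ((Real.sqrt (2 * Real.pi * σ^2))⁻¹ * Real.exp (-u^2 / (2 * σ^2))) := by
    intro u
    rw [show α * (u + μ) + β = α * u + (α * μ + β) from by ring,
      show u + μ - μ = u from by ring]
  simp_rw [heq]
  exact key α σ hσ (α * μ + β)
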